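/- Let G be a group and C ⊆ G a normal cone whose induced relation ≥ is a partial order. If f, g and h are dominants, then γ(f,h) ≤ γ(f,g)·γ(g,h). -/

import Mathlib

open Filter

/-- A subset `C` of a group is a *normal cone* if it contains `1`, is closed under
multiplication, and is invariant under conjugation. -/
def IsNormalCone {G : Type*} [Group G] (C : Set G) : Prop :=
  (1 : G) ∈ C ∧ (∀ f g : G, f ∈ C → g ∈ C → f * g ∈ C) ∧
    (∀ f h : G, f ∈ C → h * f * h⁻¹ ∈ C)

/-- The relation `f ≥ g` induced by the cone `C`: `f * g⁻¹ ∈ C`. -/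
def ConeGe {G : Type*} [Group G] (C : Set G) (f g : G) : Prop := f * g⁻¹ ∈ C

/-- `f` is a *dominant*: it lies in the cone, is not `1`, and some power of `f`
dominates any given element. -/
def IsDominant {G : Type*} [Group G] (C : Set G) (f : G) : Prop :=
  f ∈ C ∧ f ≠ 1 ∧ ∀ g : G, ∃ p : ℕ, ConeGe C (f ^ p) g

/-- `γ_k(f,g) = inf { p ∈ ℤ | f^p ≥ g^k }`. -/
noncomputable def gammaK {G : Type*} [Group G] (C : Set G) (f g : G) (k : ℕ) : ℤ :=
  sInf {p : ℤ | ConeGe C (f ^ p) (g ^ k)}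

/-!
If `γ_k(g,h) = m` then `f^{γ_m(f,g)} ≥ g^m ≥ h^k`, so `γ_k(f,h) ≤ γ_m(f,g)`: the sequence
`γ_k(f,h)` is dominated by the sequence `γ_m(f,g)` sampled at `m = γ_k(g,h)`. Since
`γ_m(f,g) ≤ (γ(f,g) + ε) m + O(1)` uniformly in `m`, dividing by `k` and letting `k → ∞`
gives `γ(f,h) ≤ (γ(f,g) + ε) γ(g,h)`. The infima defining `γ_k` are attained since, by
antisymmetry, `f^p ≥ g^k` with `p ≤ 0` would force `g^k = 1`.
-/

open Topology

theorem exists_le_mul_add_of_tendsto_div {a : ℕ → ℝ} {A A' : ℝ}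
    (ha : Tendsto (fun m : ℕ => a m / m) atTop (𝓝 A)) (hA : A < A') :
    ∃ D : ℝ, ∀ m : ℕ, a m ≤ A' * m + D := by
  have hev : ∀ᶠ m : ℕ in atTop, a m - A' * m ≤ 0 := by
    filter_upwards [ha.eventually (eventually_le_nhds hA), eventually_gt_atTop 0] with m hm hm0
    rw [div_le_iff₀ (by positivity)] at hm
    linarith
  obtain ⟨D, hD⟩ := (isBoundedUnder_of_eventually_le hev).bddAbove_range
  exact ⟨D, fun m => by linarith [hD (Set.mem_range_self m)]⟩

theorem le_mul_of_eventually_le_comp {a c : ℕ → ℝ} {b : ℕ → ℕ} {A B L : ℝ}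
    (ha : Tendsto (fun m : ℕ => a m / m) atTop (𝓝 A))
    (hb : Tendsto (fun k : ℕ => (b k : ℝ) / k) atTop (𝓝 B))
    (hc : Tendsto (fun k : ℕ => c k / k) atTop (𝓝 L))
    (hcab : ∀ᶠ k in atTop, c k ≤ a (b k)) :
    L ≤ A * B := by
  have hbound : ∀ A' > A, L ≤ A' * B := by
    intro A' hA'
    obtain ⟨D, hD⟩ := exists_le_mul_add_of_tendsto_div ha hA'
    have hlim : Tendsto (fun k : ℕ => A' * ((b k : ℝ) / k) + D * (1 / k)) atTop
        (𝓝 (A' * B + D * 0)) :=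
      (hb.const_mul A').add (tendsto_one_div_atTop_nhds_zero_nat.const_mul D)
    rw [mul_zero, add_zero] at hlim
    refine le_of_tendsto_of_tendsto hc hlim ?_
    filter_upwards [hcab] with k hk
    calc c k / k ≤ (A' * b k + D) / k := by gcongr; exact hk.trans (hD (b k))
      _ = A' * ((b k : ℝ) / k) + D * (1 / k) := by ring
  have hlim : Tendsto (fun A' : ℝ => A' * B) (𝓝[>] A) (𝓝 (A * B)) :=
    (tendsto_id.mul_const B).mono_left nhdsWithin_le_nhds
  exact ge_of_tendsto hlim (eventually_nhdsWithin_of_forall hbound)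

section Cone

variable {G : Type*} [Group G] {C : Set G}

theorem coneGe_trans (hC : IsNormalCone C) {a b c : G} (hab : ConeGe C a b)
    (hbc : ConeGe C b c) : ConeGe C a c := by
  simpa [ConeGe, mul_assoc] using hC.2.1 _ _ hab hbc

theorem IsNormalCone.pow_mem (hC : IsNormalCone C) {x : G} (hx : x ∈ C) : ∀ n : ℕ, x ^ n ∈ C
  | 0 => by simpa using hC.1
  | n + 1 => by rw [pow_succ]; exact hC.2.1 _ _ (hC.pow_mem hx n) hx

theorem IsNormalCone.zpow_mem (hC : IsNormalCone C) {x : G} (hx : x ∈ C) {p : ℤ}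
    (hp : 0 ≤ p) : x ^ p ∈ C := by
  lift p to ℕ using hp
  simpa using hC.pow_mem hx p

theorem eq_one_of_mem_of_inv_mem (hanti : ∀ f g : G, ConeGe C f g → ConeGe C g f → f = g)
    {x : G} (hx : x ∈ C) (hx' : x⁻¹ ∈ C) : x = 1 :=
  hanti x 1 (by simpa [ConeGe] using hx) (by simpa [ConeGe] using hx')

theorem pow_ne_one_of_mem_cone (hC : IsNormalCone C)
    (hanti : ∀ f g : G, ConeGe C f g → ConeGe C g f → f = g)
    {x : G} (hx : x ∈ C) (hx1 : x ≠ 1) {n : ℕ} (hn : n ≠ 0) : x ^ n ≠ 1 := by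
  intro hxn
  obtain ⟨m, rfl⟩ := Nat.exists_eq_succ_of_ne_zero hn
  have hinv : x⁻¹ = x ^ m := (eq_inv_of_mul_eq_one_left (by rwa [← pow_succ])).symm
  exact hx1 (eq_one_of_mem_of_inv_mem hanti hx (hinv ▸ hC.pow_mem hx m))

theorem one_le_of_coneGe_zpow_pow (hC : IsNormalCone C)
    (hanti : ∀ f g : G, ConeGe C f g → ConeGe C g f → f = g)
    {f g : G} (hf : f ∈ C) (hg : g ∈ C) (hg1 : g ≠ 1) {k : ℕ} (hk : k ≠ 0) {p : ℤ}
    (hp : ConeGe C (f ^ p) (g ^ k)) : 1 ≤ p := by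
  by_contra! hp1
  have hgk : g ^ k ∈ C := hC.pow_mem hg k
  have hfp : f ^ p ∈ C := by
    simpa [ConeGe] using coneGe_trans hC hp (c := 1) (by simpa [ConeGe] using hgk)
  have hfp_inv : (f ^ p)⁻¹ ∈ C := by rw [← zpow_neg]; exact hC.zpow_mem hf (by omega)
  have hfp1 : f ^ p = 1 := eq_one_of_mem_of_inv_mem hanti hfp hfp_inv
  have hgk_inv : (g ^ k)⁻¹ ∈ C := by simpa [ConeGe, hfp1] using hp
  exact pow_ne_one_of_mem_cone hC hanti hg hg1 hk (eq_one_of_mem_of_inv_mem hanti hgk hgk_inv)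

theorem isLeast_gammaK (hC : IsNormalCone C)
    (hanti : ∀ f g : G, ConeGe C f g → ConeGe C g f → f = g)
    {f g : G} (hf : IsDominant C f) (hg : g ∈ C) (hg1 : g ≠ 1) {k : ℕ} (hk : k ≠ 0) :
    IsLeast {p : ℤ | ConeGe C (f ^ p) (g ^ k)} (gammaK C f g k) := by
  have hne : {p : ℤ | ConeGe C (f ^ p) (g ^ k)}.Nonempty := by
    obtain ⟨p, hp⟩ := hf.2.2 (g ^ k)
    exact ⟨p, by simpa using hp⟩
  have hbdd : BddBelow {p : ℤ | ConeGe C (f ^ p) (g ^ k)} :=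
    ⟨1, fun p hp => one_le_of_coneGe_zpow_pow hC hanti hf.1 hg hg1 hk hp⟩
  exact ⟨Int.csInf_mem hne hbdd, fun p hp => csInf_le hbdd hp⟩

theorem one_le_gammaK (hC : IsNormalCone C)
    (hanti : ∀ f g : G, ConeGe C f g → ConeGe C g f → f = g)
    {f g : G} (hf : IsDominant C f) (hg : g ∈ C) (hg1 : g ≠ 1) {k : ℕ} (hk : k ≠ 0) :
    1 ≤ gammaK C f g k :=
  one_le_of_coneGe_zpow_pow hC hanti hf.1 hg hg1 hk (isLeast_gammaK hC hanti hf hg hg1 hk).1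

theorem gammaK_le_gammaK_gammaK (hC : IsNormalCone C)
    (hanti : ∀ f g : G, ConeGe C f g → ConeGe C g f → f = g)
    {f g h : G} (hf : IsDominant C f) (hg : IsDominant C g) (hh : h ∈ C) (hh1 : h ≠ 1)
    {k : ℕ} (hk : k ≠ 0) :
    gammaK C f h k ≤ gammaK C f g (gammaK C g h k).toNat := by
  have hm : 1 ≤ gammaK C g h k := one_le_gammaK hC hanti hg hh hh1 hk
  have hgm : ConeGe C (g ^ (gammaK C g h k).toNat) (h ^ k) := by
    rw [← zpow_natCast, Int.toNat_of_nonneg (by omega)]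
    exact (isLeast_gammaK hC hanti hg hh hh1 hk).1
  have hfm := (isLeast_gammaK hC hanti hf hg.1 hg.2.1 (by omega : (gammaK C g h k).toNat ≠ 0)).1
  exact (isLeast_gammaK hC hanti hf hh hh1 hk).2 (coneGe_trans hC hfm hgm)

end Cone

/-- For dominants `f, g, h` one has `γ(f,h) ≤ γ(f,g) * γ(g,h)`. -/
theorem statement8 {G : Type*} [Group G] (C : Set G) (hC : IsNormalCone C)
    (hanti : ∀ f g : G, ConeGe C f g → ConeGe C g f → f = g)
    (f g h : G) (hf : IsDominant C f) (hg : IsDominant C g) (hh : IsDominant C h)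
    (Lfg Lgh Lfh : ℝ)
    (hfg : Tendsto (fun k : ℕ => (gammaK C f g k : ℝ) / (k : ℝ)) atTop (nhds Lfg))
    (hgh : Tendsto (fun k : ℕ => (gammaK C g h k : ℝ) / (k : ℝ)) atTop (nhds Lgh))
    (hfh : Tendsto (fun k : ℕ => (gammaK C f h k : ℝ) / (k : ℝ)) atTop (nhds Lfh)) :
    Lfh ≤ Lfg * Lgh := by
  have htoNat : ∀ᶠ k : ℕ in atTop, ((gammaK C g h k).toNat : ℝ) = gammaK C g h k := by
    filter_upwards [eventually_ne_atTop 0] with k hk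
    exact_mod_cast Int.toNat_of_nonneg (by linarith [one_le_gammaK hC hanti hg hh.1 hh.2.1 hk])
  refine le_mul_of_eventually_le_comp (b := fun k => (gammaK C g h k).toNat) hfg
    (hgh.congr' (htoNat.mono fun k hk => by simp only [hk])) hfh ?_
  filter_upwards [eventually_ne_atTop 0] with k hk
  exact_mod_cast gammaK_le_gammaK_gammaK hC hanti hf hg hh.1 hh.2.1 hk
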